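/- For the low-density regime k/|Λ_l| ≤ ε: both E_{ν_{Λ_l,k}}[η(0) − 1] and E_{ν_{k/|Λ_l|}}[η(0) − 1] are nonnegative and bounded above by a² ε, where a is the linear-growth constant of g. -/

import Mathlib

/-- `g(k)! = g(1) ⋯ g(k)`, with `g(0)! = 1`. -/
noncomputable def gfact (g : ℕ → ℝ) : ℕ → ℝ
  | 0 => 1
  | n + 1 => gfact g n * g (n + 1)

/-- The cube `Λ_l = {-l, …, l}` in `ℤ`. -/
noncomputable abbrev Lam (l : ℕ) : Finset ℤ := Finset.Icc (-(l : ℤ)) l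

/-- Sites of `Λ_l`. -/
abbrev Site (l : ℕ) := {x : ℤ // x ∈ Lam l}

/-- Particle configurations on `Λ_l`. -/
abbrev Conf (l : ℕ) := Site l → ℕ

/-- The origin as a point of `Λ_l`. -/
def origin (l : ℕ) : Site l := ⟨0, by simp [Finset.mem_Icc]⟩

/-- Expectation of `f` with respect to the (unnormalized) weight `w`. -/
noncomputable def Ew {l : ℕ} (w f : Conf l → ℝ) : ℝ :=
  (∑' η : Conf l, w η * f η) / ∑' η : Conf l, w η

/-- Weight of the size-biased canonical measure `ν_{Λ_l,k}`
(at least one particle at the origin, `k` particles in `Λ_l`). -/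
noncomputable def nuCanW (g : ℕ → ℝ) (l k : ℕ) : Conf l → ℝ := fun η =>
  if 1 ≤ η (origin l) ∧ ∑ x, η x = k then
    (η (origin l) : ℝ) * ∏ x, (gfact g (η x))⁻¹
  else 0

/-- Expectation of `h(η(0))` under the size-biased grand-canonical single-site
marginal `ν_ρ`, `dν_ρ/dμ_ρ = η(0)/ρ`, where `μ_ρ(m) ∝ Φ(ρ)^m / g(m)!`. -/
noncomputable def EnuGC (g : ℕ → ℝ) (Φ : ℝ → ℝ) (h : ℕ → ℝ) (ρ : ℝ) : ℝ :=
  ∑' m : ℕ, h m * (((m : ℝ) / ρ) *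
    ((Φ ρ) ^ m / gfact g m / ∑' n : ℕ, (Φ ρ) ^ n / gfact g n))

lemma gfact_succ (g : ℕ → ℝ) (n : ℕ) : gfact g (n+1) = gfact g n * g (n+1) := rfl

lemma gfact_pos' {g : ℕ → ℝ} {a : ℝ} (ha : 0 < a)
    (hg : ∀ k : ℕ, a⁻¹ * k ≤ g k) : ∀ n, 0 < gfact g n := by
  intro n
  induction n with
  | zero => exact one_pos
  | succ m ih =>
      have h1 : (0:ℝ) < a⁻¹ * ((m+1 : ℕ) : ℝ) :=
        mul_pos (inv_pos.2 ha) (by exact_mod_cast Nat.succ_pos m)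
      exact mul_pos ih (lt_of_lt_of_le h1 (hg (m+1)))

lemma gfact_ge {g : ℕ → ℝ} {a : ℝ} (ha : 0 < a)
    (hg : ∀ k : ℕ, a⁻¹ * k ≤ g k) :
    ∀ n, (n.factorial : ℝ) ≤ gfact g n * a ^ n := by
  intro n
  induction n with
  | zero => simp [gfact]
  | succ m ih =>
      have hgm := (gfact_pos' ha hg m).le
      have h1 : (a⁻¹ * ((m+1:ℕ):ℝ)) * (gfact g m * a ^ m) ≤ g (m+1) * (gfact g m * a ^ m) :=
        mul_le_mul_of_nonneg_right (hg (m+1)) (by positivity)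
      calc ((m+1).factorial : ℝ) = ((m+1 : ℕ) : ℝ) * m.factorial := by
            push_cast [Nat.factorial_succ]; ring
        _ ≤ ((m+1:ℕ):ℝ) * (gfact g m * a ^ m) :=
            mul_le_mul_of_nonneg_left ih (by positivity)
        _ = (a⁻¹ * ((m+1:ℕ):ℝ)) * (gfact g m * a ^ m) * a := by
            field_simp
        _ ≤ g (m+1) * (gfact g m * a ^ m) * a :=
            mul_le_mul_of_nonneg_right h1 ha.le
        _ = gfact g (m+1) * a ^ (m+1) := by rw [gfact_succ]; ring


lemma nat_mul_sub_one_nonneg (n : ℕ) : 0 ≤ (n:ℝ) * ((n:ℝ) - 1) := by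
  rcases n with _ | m
  · simp
  · have h1 : (0:ℝ) ≤ ((m+1:ℕ):ℝ) := by positivity
    have h2 : (0:ℝ) ≤ ((m+1:ℕ):ℝ) - 1 := by
      push_cast; linarith [Nat.cast_nonneg (α := ℝ) m]
    exact mul_nonneg h1 h2

lemma gc_bound {g : ℕ → ℝ} {a : ℝ} (ha : 0 < a)
    (hg : ∀ k : ℕ, a⁻¹ * k ≤ g k ∧ g k ≤ a * k)
    (Φ : ℝ → ℝ) (ρ : ℝ) (hρ : 0 < ρ) (hφ : 0 < Φ ρ)
    (hmean : (∑' m : ℕ, (m : ℝ) * (Φ ρ) ^ m / gfact g m) /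
        (∑' m : ℕ, (Φ ρ) ^ m / gfact g m) = ρ) :
    0 ≤ EnuGC g Φ (fun m => (m : ℝ) - 1) ρ ∧
      EnuGC g Φ (fun m => (m : ℝ) - 1) ρ ≤ a ^ 2 * ρ := by
  have hglow : ∀ k : ℕ, a⁻¹ * k ≤ g k := fun k => (hg k).1
  have hpos := gfact_pos' ha hglow
  have hfac := gfact_ge ha hglow
  have haφ : 0 < a * Φ ρ := mul_pos ha hφ
  have hφn : ∀ n : ℕ, (0:ℝ) ≤ (Φ ρ)^n := fun n => pow_nonneg hφ.le n
  have hcore : ∀ n : ℕ, (Φ ρ)^n / gfact g n ≤ (a * Φ ρ)^n / n.factorial := by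
    intro n
    rw [div_le_div_iff₀ (hpos n) (by positivity)]
    calc (Φ ρ)^n * n.factorial = n.factorial * (Φ ρ)^n := by ring
      _ ≤ (gfact g n * a^n) * (Φ ρ)^n :=
          mul_le_mul_of_nonneg_right (hfac n) (hφn n)
      _ = (a * Φ ρ)^n * gfact g n := by rw [mul_pow]; ring
  have hcast : ∀ n : ℕ, (n:ℝ) ≤ 2^n := by
    intro n
    have := (Nat.lt_two_pow_self (n := n)).le
    exact_mod_cast this
  have ht0nn : ∀ n : ℕ, 0 ≤ (Φ ρ)^n / gfact g n :=
    fun n => div_nonneg (pow_nonneg hφ.le n) (hpos n).le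
  have ht0 : Summable (fun n : ℕ => (Φ ρ)^n / gfact g n) :=
    Summable.of_nonneg_of_le ht0nn hcore
      (Real.summable_pow_div_factorial (a * Φ ρ))
  have ht1 : Summable (fun n : ℕ => (n:ℝ) * (Φ ρ)^n / gfact g n) := by
    refine Summable.of_nonneg_of_le
      (fun n => div_nonneg (mul_nonneg (Nat.cast_nonneg n) (hφn n)) (hpos n).le) (fun n => ?_)
      (Real.summable_pow_div_factorial (2 * (a * Φ ρ)))
    calc (n:ℝ) * (Φ ρ)^n / gfact g n = (n:ℝ) * ((Φ ρ)^n / gfact g n) := by ring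
      _ ≤ 2^n * ((a * Φ ρ)^n / n.factorial) :=
          mul_le_mul (hcast n) (hcore n) (ht0nn n) (by positivity)
      _ = (2 * (a * Φ ρ))^n / n.factorial := by rw [mul_pow]; ring
  have ht2 : Summable (fun n : ℕ => (n:ℝ) * ((n:ℝ)-1) * (Φ ρ)^n / gfact g n) := by
    refine Summable.of_nonneg_of_le
      (fun n => div_nonneg (mul_nonneg (nat_mul_sub_one_nonneg n) (hφn n)) (hpos n).le)
      (fun n => ?_) (Real.summable_pow_div_factorial (4 * (a * Φ ρ)))
    have hb : (n:ℝ) * ((n:ℝ)-1) ≤ 4^n := by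
      calc (n:ℝ)*((n:ℝ)-1) ≤ (n:ℝ)*(n:ℝ) :=
            mul_le_mul_of_nonneg_left (by linarith [Nat.cast_nonneg (α := ℝ) n])
              (Nat.cast_nonneg n)
        _ ≤ 2^n * 2^n := mul_le_mul (hcast n) (hcast n) (Nat.cast_nonneg n) (by positivity)
        _ = 4^n := by rw [← mul_pow]; norm_num
    calc (n:ℝ)*((n:ℝ)-1) * (Φ ρ)^n / gfact g n
          = ((n:ℝ)*((n:ℝ)-1)) * ((Φ ρ)^n / gfact g n) := by ring
      _ ≤ 4^n * ((a * Φ ρ)^n / n.factorial) :=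
          mul_le_mul hb (hcore n) (ht0nn n) (by positivity)
      _ = (4 * (a * Φ ρ))^n / n.factorial := by rw [mul_pow]; ring
  have hZpos : 0 < ∑' n : ℕ, (Φ ρ)^n / gfact g n := by
    refine Summable.tsum_pos ht0 ht0nn 0 ?_
    simp [gfact]
  have hM1 : (∑' m : ℕ, (m:ℝ) * (Φ ρ)^m / gfact g m)
      = ρ * ∑' n : ℕ, (Φ ρ)^n / gfact g n := by
    rw [div_eq_iff hZpos.ne'] at hmean
    exact hmean
  have hρZ : 0 < ρ * ∑' n : ℕ, (Φ ρ)^n / gfact g n := mul_pos hρ hZpos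
  have hE : EnuGC g Φ (fun m => (m:ℝ)-1) ρ
      = (ρ * ∑' n : ℕ, (Φ ρ)^n / gfact g n)⁻¹
        * ∑' m : ℕ, (m:ℝ)*((m:ℝ)-1)*(Φ ρ)^m/gfact g m := by
    rw [EnuGC, ← tsum_mul_left]
    refine tsum_congr fun m => ?_
    have h1 : gfact g m ≠ 0 := (hpos m).ne'
    field_simp
  have hM2nn : 0 ≤ ∑' m : ℕ, (m:ℝ)*((m:ℝ)-1)*(Φ ρ)^m/gfact g m :=
    tsum_nonneg fun n =>
      div_nonneg (mul_nonneg (nat_mul_sub_one_nonneg n) (hφn n)) (hpos n).le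
  have hgpos : ∀ n : ℕ, 0 < g (n+1) := by
    intro n
    exact lt_of_lt_of_le (mul_pos (inv_pos.2 ha) (by exact_mod_cast Nat.succ_pos n))
      (hglow (n+1))
  have hratio_le : ∀ n : ℕ, ((n+1:ℕ):ℝ) / g (n+1) ≤ a := by
    intro n
    rw [div_le_iff₀ (hgpos n)]
    have h1 := hglow (n+1)
    calc ((n+1:ℕ):ℝ) = a * (a⁻¹ * ((n+1:ℕ):ℝ)) := by field_simp
      _ ≤ a * g (n+1) := mul_le_mul_of_nonneg_left h1 ha.le
  have hratio_ge : ∀ n : ℕ, a⁻¹ ≤ ((n+1:ℕ):ℝ) / g (n+1) := by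
    intro n
    rw [le_div_iff₀ (hgpos n)]
    have h1 := (hg (n+1)).2
    calc a⁻¹ * g (n+1) ≤ a⁻¹ * (a * ((n+1:ℕ):ℝ)) :=
          mul_le_mul_of_nonneg_left h1 (inv_nonneg.2 ha.le)
      _ = ((n+1:ℕ):ℝ) := by field_simp
  have hshift2 : (∑' m : ℕ, (m:ℝ)*((m:ℝ)-1)*(Φ ρ)^m/gfact g m)
      ≤ (a * Φ ρ) * ∑' m : ℕ, (m:ℝ) * (Φ ρ)^m / gfact g m := by
    rw [Summable.tsum_eq_zero_add ht2]
    simp only [Nat.cast_zero, zero_mul, zero_div, zero_add]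
    rw [← tsum_mul_left]
    refine Summable.tsum_le_tsum (fun n => ?_) ((summable_nat_add_iff (f := fun n : ℕ => (n:ℝ)*((n:ℝ)-1)*(Φ ρ)^n/gfact g n) 1).2 ht2) (ht1.mul_left _)
    have hxx : ((n+1:ℕ):ℝ) * (((n+1:ℕ):ℝ)-1) * (Φ ρ)^(n+1) / gfact g (n+1)
        = (((n+1:ℕ):ℝ) / g (n+1)) * (Φ ρ) * ((n:ℝ) * (Φ ρ)^n / gfact g n) := by
      rw [gfact_succ]
      have h2 : (((n+1:ℕ):ℝ)-1) = (n:ℝ) := by push_cast; ring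
      rw [h2]
      field_simp
      ring
    push_cast at hxx ⊢
    rw [hxx]
    have hT : 0 ≤ (n:ℝ) * (Φ ρ)^n / gfact g n := div_nonneg (mul_nonneg (Nat.cast_nonneg n) (hφn n)) (hpos n).le
    have h3 : ((n+1:ℕ):ℝ) / g (n+1) * (Φ ρ) ≤ a * Φ ρ :=
      mul_le_mul_of_nonneg_right (hratio_le n) hφ.le
    push_cast at h3
    exact mul_le_mul_of_nonneg_right h3 hT
  have hφaρ : Φ ρ ≤ a * ρ := by
    have hshift1 : (a⁻¹ * Φ ρ) * (∑' n : ℕ, (Φ ρ)^n / gfact g n)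
        ≤ ∑' m : ℕ, (m:ℝ) * (Φ ρ)^m / gfact g m := by
      rw [Summable.tsum_eq_zero_add ht1]
      simp only [Nat.cast_zero, zero_mul, zero_div, zero_add]
      rw [← tsum_mul_left]
      refine Summable.tsum_le_tsum (fun n => ?_) (ht0.mul_left _) ((summable_nat_add_iff (f := fun n : ℕ => (n:ℝ)*(Φ ρ)^n/gfact g n) 1).2 ht1)
      have hxx : ((n+1:ℕ):ℝ) * (Φ ρ)^(n+1) / gfact g (n+1)
          = (((n+1:ℕ):ℝ) / g (n+1)) * (Φ ρ) * ((Φ ρ)^n / gfact g n) := by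
        rw [gfact_succ]
        field_simp
        ring
      push_cast at hxx ⊢
      rw [hxx]
      have h3 : a⁻¹ * (Φ ρ) ≤ ((n+1:ℕ):ℝ) / g (n+1) * (Φ ρ) :=
        mul_le_mul_of_nonneg_right (hratio_ge n) hφ.le
      push_cast at h3
      exact mul_le_mul_of_nonneg_right h3 (ht0nn n)
    rw [hM1] at hshift1
    have h4 : a⁻¹ * Φ ρ ≤ ρ :=
      (mul_le_mul_iff_of_pos_right hZpos).1 hshift1
    calc Φ ρ = a * (a⁻¹ * Φ ρ) := by field_simp
      _ ≤ a * ρ := mul_le_mul_of_nonneg_left h4 ha.le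
  constructor
  · rw [hE]
    exact mul_nonneg (inv_nonneg.2 hρZ.le) hM2nn
  · rw [hE]
    calc (ρ * ∑' n : ℕ, (Φ ρ)^n / gfact g n)⁻¹
          * ∑' m : ℕ, (m:ℝ)*((m:ℝ)-1)*(Φ ρ)^m/gfact g m
        ≤ (ρ * ∑' n : ℕ, (Φ ρ)^n / gfact g n)⁻¹
          * ((a * Φ ρ) * (ρ * ∑' n : ℕ, (Φ ρ)^n / gfact g n)) := by
          refine mul_le_mul_of_nonneg_left ?_ (inv_nonneg.2 hρZ.le)
          rw [← hM1]
          exact hshift2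
      _ = a * Φ ρ := by field_simp
      _ ≤ a * (a * ρ) := mul_le_mul_of_nonneg_left hφaρ ha.le
      _ = a^2 * ρ := by ring


noncomputable def cW (g : ℕ → ℝ) (l : ℕ) (η : Conf l) : ℝ := ∏ x, (gfact g (η x))⁻¹

noncomputable def cR (g : ℕ → ℝ) (l : ℕ) (η : Conf l) : ℝ :=
  ∏ x ∈ Finset.univ.erase (origin l), (gfact g (η x))⁻¹

noncomputable def cs (l j : ℕ) : Finset (Conf l) :=
  (Fintype.piFinset fun _ : Site l => Finset.range (j+1)).filter (fun η => ∑ x, η x = j)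

lemma mem_cs {l j : ℕ} {η : Conf l} : η ∈ cs l j ↔ ∑ x, η x = j := by
  constructor
  · exact fun h => (Finset.mem_filter.1 h).2
  · intro h
    refine Finset.mem_filter.2 ⟨Fintype.mem_piFinset.2 fun x => Finset.mem_range.2 ?_, h⟩
    exact Nat.lt_succ_of_le (h ▸ Finset.single_le_sum (f := fun x => η x)
      (fun _ _ => Nat.zero_le _) (Finset.mem_univ x))

lemma cW_eq (g : ℕ → ℝ) (l : ℕ) (η : Conf l) :
    cW g l η = (gfact g (η (origin l)))⁻¹ * cR g l η := by
  rw [cW, cR, ← Finset.mul_prod_erase Finset.univ _ (Finset.mem_univ (origin l))]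

lemma cR_update (g : ℕ → ℝ) (l : ℕ) (ζ : Conf l) (m : ℕ) :
    cR g l (Function.update ζ (origin l) m) = cR g l ζ := by
  rw [cR, cR]
  refine Finset.prod_congr rfl fun x hx => ?_
  rw [Function.update_of_ne (Finset.ne_of_mem_erase hx)]

lemma sum_update (l : ℕ) (ζ : Conf l) (m : ℕ) :
    ∑ x, Function.update ζ (origin l) m x = m + ∑ x ∈ Finset.univ.erase (origin l), ζ x := by
  rw [← Finset.add_sum_erase Finset.univ _ (Finset.mem_univ (origin l)),
    Function.update_self]
  congr 1
  exact Finset.sum_congr rfl fun x hx => by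
    rw [Function.update_of_ne (Finset.ne_of_mem_erase hx)]

lemma sum_split (l : ℕ) (ζ : Conf l) :
    ∑ x, ζ x = ζ (origin l) + ∑ x ∈ Finset.univ.erase (origin l), ζ x :=
  (Finset.add_sum_erase Finset.univ _ (Finset.mem_univ (origin l))).symm

lemma sum_shift (g : ℕ → ℝ) (l j : ℕ) (c : ℕ → ℝ) (hc : c 0 = 0) :
    ∑ η ∈ cs l (j+1), c (η (origin l)) * cW g l η
      = ∑ ζ ∈ cs l j, c (ζ (origin l) + 1) * ((gfact g (ζ (origin l) + 1))⁻¹ * cR g l ζ) := by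
  classical
  have hstep : ∑ η ∈ cs l (j+1), c (η (origin l)) * cW g l η
      = ∑ η ∈ (cs l (j+1)).filter (fun η => η (origin l) ≠ 0), c (η (origin l)) * cW g l η := by
    refine (Finset.sum_subset (Finset.filter_subset _ _) ?_).symm
    intro η hη hnt
    have h0 : η (origin l) = 0 := by
      by_contra h
      exact hnt (Finset.mem_filter.2 ⟨hη, h⟩)
    rw [h0, hc, zero_mul]
  rw [hstep]
  refine Finset.sum_nbij'
    (i := fun η => Function.update η (origin l) (η (origin l) - 1))
    (j := fun ζ => Function.update ζ (origin l) (ζ (origin l) + 1)) ?_ ?_ ?_ ?_ ?_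
  · intro η hη
    obtain ⟨hη1, hη2⟩ := Finset.mem_filter.1 hη
    have hs := mem_cs.1 hη1
    rw [sum_split] at hs
    refine mem_cs.2 ?_
    rw [sum_update]
    omega
  · intro ζ hζ
    have hs := mem_cs.1 hζ
    rw [sum_split] at hs
    refine Finset.mem_filter.2 ⟨mem_cs.2 ?_, ?_⟩
    · rw [sum_update]; omega
    · beta_reduce; rw [Function.update_self]; omega
  · intro η hη
    obtain ⟨-, hη2⟩ := Finset.mem_filter.1 hη
    beta_reduce
    rw [Function.update_self, Function.update_idem]
    have : η (origin l) - 1 + 1 = η (origin l) := by omega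
    rw [this, Function.update_eq_self]
  · intro ζ hζ
    beta_reduce
    rw [Function.update_self, Function.update_idem]
    have : ζ (origin l) + 1 - 1 = ζ (origin l) := by omega
    rw [this, Function.update_eq_self]
  · intro η hη
    obtain ⟨-, hη2⟩ := Finset.mem_filter.1 hη
    beta_reduce
    rw [Function.update_self, cR_update]
    have h1 : η (origin l) - 1 + 1 = η (origin l) := by omega
    rw [h1, cW_eq, cR]

lemma sum_site (g : ℕ → ℝ) (l j : ℕ) (x : Site l) :
    ∑ ζ ∈ cs l j, (ζ x : ℝ) * cW g l ζ
      = ∑ ζ ∈ cs l j, (ζ (origin l) : ℝ) * cW g l ζ := by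
  classical
  have hmemmap : ∀ ζ : Conf l, ζ ∈ cs l j → ζ ∘ (Equiv.swap (origin l) x) ∈ cs l j := by
    intro ζ hζ
    refine mem_cs.2 ?_
    rw [show ∑ y, (ζ ∘ (Equiv.swap (origin l) x)) y = ∑ y, ζ y from
      Equiv.sum_comp (Equiv.swap (origin l) x) ζ]
    exact mem_cs.1 hζ
  refine Finset.sum_nbij' (i := fun ζ => ζ ∘ (Equiv.swap (origin l) x))
    (j := fun ζ => ζ ∘ (Equiv.swap (origin l) x)) hmemmap hmemmap ?_ ?_ ?_
  · intro ζ hζ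
    funext y
    simp [Function.comp, Equiv.swap_apply_self]
  · intro ζ hζ
    funext y
    simp [Function.comp, Equiv.swap_apply_self]
  · intro ζ hζ
    beta_reduce
    have h1 : (ζ ∘ (Equiv.swap (origin l) x)) (origin l) = ζ x := by
      simp [Function.comp, Equiv.swap_apply_left]
    have h2 : cW g l (ζ ∘ (Equiv.swap (origin l) x)) = cW g l ζ := by
      rw [cW, cW]
      exact Equiv.prod_comp (Equiv.swap (origin l) x) (fun y => (gfact g (ζ y))⁻¹)
    rw [h1, h2]

lemma card_site (l : ℕ) : Fintype.card (Site l) = 2 * l + 1 := by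
  rw [Fintype.card_coe]
  rw [Int.card_Icc]
  omega

set_option maxHeartbeats 1000000 in
lemma can_bound {g : ℕ → ℝ} {a : ℝ} (ha : 0 < a)
    (hg : ∀ k : ℕ, a⁻¹ * k ≤ g k ∧ g k ≤ a * k) (l k : ℕ) (hk : 1 ≤ k) :
    0 ≤ Ew (nuCanW g l k) (fun η => (η (origin l) : ℝ) - 1) ∧
      Ew (nuCanW g l k) (fun η => (η (origin l) : ℝ) - 1)
        ≤ a ^ 2 * ((k : ℝ) / (2 * (l : ℝ) + 1)) := by
  classical
  have hglow : ∀ k : ℕ, a⁻¹ * k ≤ g k := fun k => (hg k).1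
  have hpos := gfact_pos' ha hglow
  have hWpos : ∀ η : Conf l, 0 < cW g l η :=
    fun η => Finset.prod_pos fun x _ => inv_pos.2 (hpos _)
  have hRpos : ∀ η : Conf l, 0 < cR g l η :=
    fun η => Finset.prod_pos fun x _ => inv_pos.2 (hpos _)
  obtain ⟨j, rfl⟩ : ∃ j, k = j + 1 := ⟨k - 1, (Nat.succ_pred_eq_of_pos hk).symm⟩
  have hgpos : ∀ n : ℕ, 0 < g (n+1) := fun n =>
    lt_of_lt_of_le (mul_pos (inv_pos.2 ha) (by exact_mod_cast Nat.succ_pos n)) (hglow (n+1))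
  have hsplit : ∀ n : ℕ, ((n:ℝ)+1) * (gfact g (n+1))⁻¹
      = (((n:ℝ)+1) / g (n+1)) * (gfact g n)⁻¹ := by
    intro n
    rw [gfact_succ]
    have h1 : gfact g n ≠ 0 := (hpos n).ne'
    have h2 : g (n+1) ≠ 0 := (hgpos n).ne'
    field_simp
  have hratio_le : ∀ n : ℕ, ((n:ℝ)+1) / g (n+1) ≤ a := by
    intro n
    rw [div_le_iff₀ (hgpos n)]
    have h1 := hglow (n+1)
    push_cast at h1
    calc (n:ℝ)+1 = a * (a⁻¹ * ((n:ℝ)+1)) := by field_simp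
      _ ≤ a * g (n+1) := mul_le_mul_of_nonneg_left h1 ha.le
  have hratio_ge : ∀ n : ℕ, a⁻¹ ≤ ((n:ℝ)+1) / g (n+1) := by
    intro n
    rw [le_div_iff₀ (hgpos n)]
    have h1 := (hg (n+1)).2
    push_cast at h1
    calc a⁻¹ * g (n+1) ≤ a⁻¹ * (a * ((n:ℝ)+1)) :=
          mul_le_mul_of_nonneg_left h1 (inv_nonneg.2 ha.le)
      _ = (n:ℝ)+1 := by field_simp
  have hfrac_le : ∀ n : ℕ, ((n:ℝ)+1) * (gfact g (n+1))⁻¹ ≤ a * (gfact g n)⁻¹ := by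
    intro n
    rw [hsplit n]
    exact mul_le_mul_of_nonneg_right (hratio_le n) (inv_pos.2 (hpos n)).le
  have hfrac_ge : ∀ n : ℕ, a⁻¹ * (gfact g n)⁻¹ ≤ ((n:ℝ)+1) * (gfact g (n+1))⁻¹ := by
    intro n
    rw [hsplit n]
    exact mul_le_mul_of_nonneg_right (hratio_ge n) (inv_pos.2 (hpos n)).le
  -- the four finite sums
  set T := ∑ ζ ∈ cs l j, cW g l ζ with hT
  set U := ∑ ζ ∈ cs l j, (ζ (origin l) : ℝ) * cW g l ζ with hU
  set D := ∑ ζ ∈ cs l j, ((ζ (origin l) : ℝ) + 1) *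
    ((gfact g (ζ (origin l) + 1))⁻¹ * cR g l ζ) with hD
  set N := ∑ ζ ∈ cs l j, (((ζ (origin l) : ℝ) + 1) * (ζ (origin l) : ℝ)) *
    ((gfact g (ζ (origin l) + 1))⁻¹ * cR g l ζ) with hN
  have hzero : ∀ η ∉ cs l (j+1), nuCanW g l (j+1) η = 0 := by
    intro η hη
    rw [nuCanW, if_neg]
    rintro ⟨-, h2⟩
    exact hη (mem_cs.2 h2)
  have hcan : ∀ η ∈ cs l (j+1),
      nuCanW g l (j+1) η = (η (origin l) : ℝ) * cW g l η := by
    intro η hη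
    rcases Nat.eq_zero_or_pos (η (origin l)) with h0 | h1
    · rw [nuCanW, if_neg, h0]
      · simp
      · rintro ⟨h2, -⟩; omega
    · rw [nuCanW, if_pos ⟨h1, mem_cs.1 hη⟩, cW]
  have hshiftD : (∑ η ∈ cs l (j+1), (η (origin l) : ℝ) * cW g l η) = D := by
    rw [hD]
    have h := sum_shift g l j (fun n => (n:ℝ)) (by norm_num)
    simpa using h
  have hshiftN : (∑ η ∈ cs l (j+1),
      ((η (origin l) : ℝ) * ((η (origin l) : ℝ) - 1)) * cW g l η) = N := by
    rw [hN]
    have h := sum_shift g l j (fun n => (n:ℝ) * ((n:ℝ) - 1)) (by norm_num)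
    simpa [mul_comm, mul_assoc, mul_left_comm] using h
  have hden : (∑' η : Conf l, nuCanW g l (j+1) η) = D := by
    rw [tsum_eq_sum (s := cs l (j+1)) hzero, ← hshiftD]
    exact Finset.sum_congr rfl hcan
  have hnum : (∑' η : Conf l, nuCanW g l (j+1) η * ((η (origin l) : ℝ) - 1)) = N := by
    rw [tsum_eq_sum (s := cs l (j+1)) (fun η hη => by rw [hzero η hη, zero_mul]),
      ← hshiftN]
    exact Finset.sum_congr rfl fun η hη => by rw [hcan η hη]; ring
  have hEw : Ew (nuCanW g l (j+1)) (fun η => (η (origin l) : ℝ) - 1) = N / D := by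
    rw [Ew, hden, ← hnum]
  -- positivity facts
  have hTpos : 0 < T := by
    refine Finset.sum_pos (fun ζ _ => hWpos ζ) ?_
    refine ⟨fun x => if x = origin l then j else 0, mem_cs.2 ?_⟩
    simp
  have hUnn : 0 ≤ U :=
    Finset.sum_nonneg fun ζ _ => mul_nonneg (Nat.cast_nonneg _) (hWpos ζ).le
  have hDge : a⁻¹ * T ≤ D := by
    rw [hT, hD, Finset.mul_sum]
    refine Finset.sum_le_sum fun ζ hζ => ?_
    have h1 := mul_le_mul_of_nonneg_right (hfrac_ge (ζ (origin l))) (hRpos ζ).le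
    rw [cW_eq]
    calc a⁻¹ * ((gfact g (ζ (origin l)))⁻¹ * cR g l ζ)
        = a⁻¹ * (gfact g (ζ (origin l)))⁻¹ * cR g l ζ := by ring
      _ ≤ ((ζ (origin l) : ℝ) + 1) * (gfact g (ζ (origin l) + 1))⁻¹ * cR g l ζ := h1
      _ = ((ζ (origin l) : ℝ) + 1) * ((gfact g (ζ (origin l) + 1))⁻¹ * cR g l ζ) := by ring
  have hNle : N ≤ a * U := by
    rw [hN, hU, Finset.mul_sum]
    refine Finset.sum_le_sum fun ζ hζ => ?_
    have h2 := mul_le_mul_of_nonneg_right (hfrac_le (ζ (origin l)))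
      (mul_nonneg (Nat.cast_nonneg (ζ (origin l))) (hRpos ζ).le)
    rw [cW_eq]
    calc (((ζ (origin l) : ℝ) + 1) * (ζ (origin l) : ℝ)) *
          ((gfact g (ζ (origin l) + 1))⁻¹ * cR g l ζ)
        = ((ζ (origin l) : ℝ) + 1) * (gfact g (ζ (origin l) + 1))⁻¹ *
          ((ζ (origin l) : ℝ) * cR g l ζ) := by ring
      _ ≤ a * (gfact g (ζ (origin l)))⁻¹ * ((ζ (origin l) : ℝ) * cR g l ζ) := h2
      _ = a * ((ζ (origin l) : ℝ) * ((gfact g (ζ (origin l)))⁻¹ * cR g l ζ)) := by ring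
  have hNnn : 0 ≤ N := by
    rw [hN]
    refine Finset.sum_nonneg fun ζ _ => ?_
    refine mul_nonneg (mul_nonneg ?_ (Nat.cast_nonneg _))
      (mul_nonneg (inv_pos.2 (hpos _)).le (hRpos ζ).le)
    positivity
  have hDpos : 0 < D := lt_of_lt_of_le (mul_pos (inv_pos.2 ha) hTpos) hDge
  have h2l1 : (0:ℝ) < 2 * (l:ℝ) + 1 := by positivity
  have hUT : (2 * (l:ℝ) + 1) * U = (j:ℝ) * T := by
    have h1 : ∑ x : Site l, ∑ ζ ∈ cs l j, (ζ x : ℝ) * cW g l ζ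
        = (2 * (l:ℝ) + 1) * U := by
      rw [Finset.sum_congr rfl (fun x _ => sum_site g l j x), Finset.sum_const,
        Finset.card_univ, card_site, nsmul_eq_mul]
      push_cast
      ring
    have h2 : ∑ x : Site l, ∑ ζ ∈ cs l j, (ζ x : ℝ) * cW g l ζ = (j:ℝ) * T := by
      rw [Finset.sum_comm, hT, Finset.mul_sum]
      refine Finset.sum_congr rfl fun ζ hζ => ?_
      rw [← Finset.sum_mul]
      congr 1
      rw [← Nat.cast_sum, mem_cs.1 hζ]
    rw [← h1, h2]
  have hUeq : U = (j:ℝ) * T / (2 * (l:ℝ) + 1) := by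
    field_simp
    linarith [hUT]
  refine ⟨?_, ?_⟩
  · rw [hEw]
    exact div_nonneg hNnn hDpos.le
  · rw [hEw, div_le_iff₀ hDpos]
    have hjj : ((j+1:ℕ):ℝ) = (j:ℝ) + 1 := by push_cast; ring
    rw [hjj]
    calc N ≤ a * U := hNle
      _ = a * ((j:ℝ) * T / (2*(l:ℝ)+1)) := by rw [hUeq]
      _ ≤ a * (((j:ℝ)+1) * T / (2*(l:ℝ)+1)) := by
          refine mul_le_mul_of_nonneg_left ?_ ha.le
          have h3 : (j:ℝ) * T ≤ ((j:ℝ)+1) * T := by nlinarith [hTpos.le]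
          exact (div_le_div_iff_of_pos_right h2l1).2 h3
      _ = (a^2 * (((j:ℝ)+1) / (2*(l:ℝ)+1))) * (a⁻¹ * T) := by
          field_simp
      _ ≤ (a^2 * (((j:ℝ)+1) / (2*(l:ℝ)+1))) * D :=
          mul_le_mul_of_nonneg_left hDge
            (mul_nonneg (sq_nonneg a)
              (div_nonneg (by positivity) (by positivity)))

/-- In the low-density regime `k/|Λ_l| ≤ ε`, both
`E_{ν_{Λ_l,k}}[η(0) − 1]` and `E_{ν_{k/|Λ_l|}}[η(0) − 1]` are nonnegative and
bounded above by `a² ε`, where `a` is the linear-growth constant of `g`. -/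
theorem low_density_size_biased_bounds
    (g : ℕ → ℝ) (hg0 : g 0 = 0) (a : ℝ) (ha : 0 < a)
    (hg : ∀ k : ℕ, a⁻¹ * k ≤ g k ∧ g k ≤ a * k)
    (Φ : ℝ → ℝ)
    (hΦ : ∀ ρ : ℝ, 0 < ρ → 0 < Φ ρ ∧
      (∑' m : ℕ, (m : ℝ) * (Φ ρ) ^ m / gfact g m) /
        (∑' m : ℕ, (Φ ρ) ^ m / gfact g m) = ρ)
    (l k : ℕ) (hl : 1 ≤ l) (hk : 1 ≤ k)
    (ε : ℝ) (hε : 0 < ε) (hlow : (k : ℝ) / (2 * l + 1) ≤ ε) :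
    (0 ≤ Ew (nuCanW g l k) (fun η => (η (origin l) : ℝ) - 1) ∧
      Ew (nuCanW g l k) (fun η => (η (origin l) : ℝ) - 1) ≤ a ^ 2 * ε) ∧
    (0 ≤ EnuGC g Φ (fun m => (m : ℝ) - 1) ((k : ℝ) / (2 * l + 1)) ∧
      EnuGC g Φ (fun m => (m : ℝ) - 1) ((k : ℝ) / (2 * l + 1)) ≤ a ^ 2 * ε) := by
  have hk' : (0:ℝ) < k := by exact_mod_cast hk
  have hρ : 0 < (k:ℝ) / (2 * (l:ℝ) + 1) := div_pos hk' (by positivity)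
  obtain ⟨hφ1, hφ2⟩ := hΦ _ hρ
  have hgc := gc_bound ha hg Φ _ hρ hφ1 hφ2
  have hcan := can_bound (g := g) ha hg l k hk
  have hbound : a ^ 2 * ((k:ℝ) / (2 * (l:ℝ) + 1)) ≤ a ^ 2 * ε :=
    mul_le_mul_of_nonneg_left hlow (sq_nonneg a)
  exact ⟨⟨hcan.1, hcan.2.trans hbound⟩, ⟨hgc.1, hgc.2.trans hbound⟩⟩
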